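/- A subset D of a generalized topological space (Y, γ) is sλ-closed if and only if D = sker_γ(D) ∩ cl_sγ(D). -/
import Mathlib


open Set

variable {Y : Type*}

/-- A generalized topology: contains ∅ and is closed under arbitrary unions. -/
def IsGT (γ : Set (Set Y)) : Prop := ∅ ∈ γ ∧ ∀ S ⊆ γ, ⋃₀ S ∈ γ

/-- γ-closure: intersection of all γ-closed supersets. -/
def gCl (γ : Set (Set Y)) (D : Set Y) : Set Y := ⋂₀ {C | Cᶜ ∈ γ ∧ D ⊆ C}

/-- sγ-open set. -/
def SOpen (γ : Set (Set Y)) (D : Set Y) : Prop := ∃ V ∈ γ, V ⊆ D ∧ D ⊆ gCl γ V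

/-- sγ-closed set. -/
def SClosed (γ : Set (Set Y)) (D : Set Y) : Prop := SOpen γ Dᶜ

/-- semi-kernel: intersection of all sγ-open supersets. -/
def sKer (γ : Set (Set Y)) (D : Set Y) : Set Y := ⋂₀ {G | SOpen γ G ∧ D ⊆ G}

/-- sγ-closure: intersection of all sγ-closed supersets. -/
def sCl (γ : Set (Set Y)) (D : Set Y) : Set Y := ⋂₀ {C | SClosed γ C ∧ D ⊆ C}

/-- sλ-closed set. -/
def SLClosed (γ : Set (Set Y)) (D : Set Y) : Prop :=
  ∃ M N : Set Y, M = sKer γ M ∧ SClosed γ N ∧ D = M ∩ N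

/-- sλ-open set. -/
def SLOpen (γ : Set (Set Y)) (D : Set Y) : Prop := SLClosed γ Dᶜ

/-- sλ-closure: intersection of all sλ-closed supersets. -/
def slCl (γ : Set (Set Y)) (D : Set Y) : Set Y := ⋂₀ {C | SLClosed γ C ∧ D ⊆ C}

/-- sλ-interior: union of all sλ-open subsets. -/
def slInt (γ : Set (Set Y)) (D : Set Y) : Set Y := ⋃₀ {U | SLOpen γ U ∧ U ⊆ D}

/-- sg_λ-closed set. -/
def SgClosed (γ : Set (Set Y)) (D : Set Y) : Prop :=
  ∀ V : Set Y, SLOpen γ V → D ⊆ V → slCl γ D ⊆ V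

/-- sg_λ-open set. -/
def SgOpen (γ : Set (Set Y)) (D : Set Y) : Prop := SgClosed γ Dᶜ

/-- sλR₀: every sλ-open set contains the sλ-closure of each of its singletons. -/
def SLR0 (γ : Set (Set Y)) : Prop :=
  ∀ G : Set Y, SLOpen γ G → ∀ y ∈ G, slCl γ {y} ⊆ G

/-- sλR₁. -/
def SLR1 (γ : Set (Set Y)) : Prop :=
  ∀ p q : Y, p ∉ slCl γ {q} →
    ∃ E F : Set Y, SLOpen γ E ∧ SLOpen γ F ∧ p ∈ E ∧ q ∈ F ∧ E ∩ F = ∅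

/-- sλT₁. -/
def SLT1 (γ : Set (Set Y)) : Prop :=
  ∀ p q : Y, p ≠ q →
    ∃ E F : Set Y, SLOpen γ E ∧ SLOpen γ F ∧ p ∈ E ∧ q ∉ E ∧ q ∈ F ∧ p ∉ F

/-- sλT₂ (sλ-Hausdorff). -/
def SLT2 (γ : Set (Set Y)) : Prop :=
  ∀ p q : Y, p ≠ q →
    ∃ E F : Set Y, SLOpen γ E ∧ SLOpen γ F ∧ p ∈ E ∧ q ∈ F ∧ E ∩ F = ∅

/-- sλ-regular. -/
def SLRegular (γ : Set (Set Y)) : Prop :=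
  ∀ A : Set Y, SLClosed γ A → ∀ p : Y, p ∉ A →
    ∃ E F : Set Y, SLOpen γ E ∧ SLOpen γ F ∧ A ⊆ E ∧ p ∈ F ∧
      slCl γ E ∩ slCl γ F = ∅

/-- sλ-normal. -/
def SLNormal (γ : Set (Set Y)) : Prop :=
  ∀ A B : Set Y, SLClosed γ A → SLClosed γ B → A ∩ B = ∅ →
    ∃ E F : Set Y, SLOpen γ E ∧ SLOpen γ F ∧ A ⊆ E ∧ B ⊆ F ∧
      slCl γ E ∩ slCl γ F = ∅

/-- sλ-compact. -/
def SLCompact (γ : Set (Set Y)) : Prop :=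
  ∀ 𝒞 : Set (Set Y), (∀ U ∈ 𝒞, SLOpen γ U) → ⋃₀ 𝒞 = univ →
    ∃ 𝒟 : Finset (Set Y), ↑𝒟 ⊆ 𝒞 ∧ ⋃₀ (𝒟 : Set (Set Y)) = univ

/-- sλ-weakly separated. -/
def SLWeaklySeparated (γ : Set (Set Y)) (G H : Set Y) : Prop :=
  (G ∩ slCl γ H) ∪ (H ∩ slCl γ G) = ∅

/-- sλ-completely normal. -/
def SLCompletelyNormal (γ : Set (Set Y)) : Prop :=
  ∀ G H : Set Y, SLWeaklySeparated γ G H →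
    ∃ U V : Set Y, SLOpen γ U ∧ SLOpen γ V ∧ G ⊆ U ∧ H ⊆ V ∧
      slCl γ U ∩ slCl γ V = ∅

/-- sλ-continuous real-valued function. -/
def SLContinuousReal (γ : Set (Set Y)) (f : Y → ℝ) : Prop :=
  ∀ s : Set ℝ, IsOpen s → SLOpen γ (f ⁻¹' s)

lemma gCl_mono (γ : Set (Set Y)) {A B : Set Y} (h : A ⊆ B) : gCl γ A ⊆ gCl γ B := by
  intro x hx
  simp only [gCl, mem_sInter, mem_setOf_eq] at hx ⊢
  exact fun C hC => hx C ⟨hC.1, h.trans hC.2⟩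

lemma sOpen_sUnion (γ : Set (Set Y)) (hγ : IsGT γ) {S : Set (Set Y)}
    (hS : ∀ D ∈ S, SOpen γ D) : SOpen γ (⋃₀ S) := by
  choose V hVγ hVsub hVcl using hS
  refine ⟨⋃₀ {W | ∃ D, ∃ h : D ∈ S, W = V D h}, ?_, ?_, ?_⟩
  · exact hγ.2 _ (by rintro W ⟨D, hD, rfl⟩; exact hVγ D hD)
  · rintro x ⟨W, ⟨D, hD, rfl⟩, hx⟩
    exact ⟨D, hD, hVsub D hD hx⟩
  · rintro x ⟨D, hD, hx⟩
    exact gCl_mono γ (subset_sUnion_of_mem (show V D hD ∈ {W | ∃ D, ∃ h : D ∈ S, W = V D h} from ⟨D, hD, rfl⟩)) (hVcl D hD hx)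

lemma sClosed_sCl (γ : Set (Set Y)) (hγ : IsGT γ) (D : Set Y) : SClosed γ (sCl γ D) := by
  have : (sCl γ D)ᶜ = ⋃₀ {U | SOpen γ U ∧ D ⊆ Uᶜ} := by
    ext x
    simp only [sCl, mem_compl_iff, mem_sInter, mem_sUnion, mem_setOf_eq, not_forall]
    constructor
    · rintro ⟨C, ⟨hC, hDC⟩, hx⟩
      exact ⟨Cᶜ, ⟨hC, by simpa using hDC⟩, hx⟩
    · rintro ⟨U, ⟨hU, hDU⟩, hx⟩
      exact ⟨Uᶜ, ⟨by simpa [SClosed] using hU, hDU⟩, by simpa using hx⟩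
  rw [SClosed, this]
  exact sOpen_sUnion γ hγ fun U hU => hU.1

lemma subset_sKer (γ : Set (Set Y)) (D : Set Y) : D ⊆ sKer γ D := by
  intro x hx
  simp only [sKer, mem_sInter, mem_setOf_eq]
  exact fun G hG => hG.2 hx

lemma subset_sCl (γ : Set (Set Y)) (D : Set Y) : D ⊆ sCl γ D := by
  intro x hx
  simp only [sCl, mem_sInter, mem_setOf_eq]
  exact fun C hC => hC.2 hx

lemma sKer_mono (γ : Set (Set Y)) {A B : Set Y} (h : A ⊆ B) : sKer γ A ⊆ sKer γ B := by
  intro x hx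
  simp only [sKer, mem_sInter, mem_setOf_eq] at hx ⊢
  exact fun G hG => hx G ⟨hG.1, h.trans hG.2⟩

lemma sKer_idem (γ : Set (Set Y)) (D : Set Y) : sKer γ (sKer γ D) = sKer γ D := by
  apply Subset.antisymm
  · intro x hx
    simp only [sKer, mem_sInter, mem_setOf_eq] at hx ⊢
    exact fun G hG => hx G ⟨hG.1, fun y hy => by
      simp only [sKer, mem_sInter, mem_setOf_eq] at hy
      exact hy G hG⟩
  · exact sKer_mono γ (subset_sKer γ D)

theorem stmt2 (γ : Set (Set Y)) (hγ : IsGT γ) (D : Set Y) :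
    SLClosed γ D ↔ D = sKer γ D ∩ sCl γ D := by
  constructor
  · rintro ⟨M, N, hM, hN, rfl⟩
    apply Subset.antisymm
    · exact subset_inter (subset_sKer γ _) (subset_sCl γ _)
    · intro x ⟨hx1, hx2⟩
      constructor
      · have : sKer γ (M ∩ N) ⊆ M :=
          (sKer_mono γ inter_subset_left).trans hM.ge
        exact this hx1
      · simp only [sCl, mem_sInter, mem_setOf_eq] at hx2
        exact hx2 N ⟨hN, inter_subset_right⟩
  · intro h
    exact ⟨sKer γ D, sCl γ D, (sKer_idem γ D).symm, sClosed_sCl γ hγ D, h⟩
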